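/- Let ρ = (a^b) with a, b ≥ 2 and ab = n. Then the two neighbors α(ρ) = (a+1, a^{b-2}, a-1) and β(ρ) = (a^{b-1}, a-1, 1) of ρ are themselves adjacent in the partition graph G_n, so that {ρ, α(ρ), β(ρ)} forms a triangle. -/
import Mathlib


/-- A partition of `n`: a multiset of positive integers summing to `n`. -/
def IsPartition (n : ℕ) (s : Multiset ℕ) : Prop :=
  s.sum = n ∧ ∀ x ∈ s, 0 < x

/-- `t` is obtained from `s` by a single elementary unit transfer: one unit is
moved from a part `x` (the part is deleted if it becomes `0`) onto a part `y`
(`y = 0` encodes creation of a new part of size `1`). -/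
def UnitTransfer (s t : Multiset ℕ) : Prop :=
  ∃ (u : Multiset ℕ) (x y : ℕ), 0 < x ∧
    s = u + Multiset.filter (fun z => 0 < z) {x, y} ∧
    t = u + Multiset.filter (fun z => 0 < z) {x - 1, y + 1}

/-- Adjacency in the partition graph `G_n`. -/
def Adj (n : ℕ) (s t : Multiset ℕ) : Prop :=
  IsPartition n s ∧ IsPartition n t ∧ s ≠ t ∧ (UnitTransfer s t ∨ UnitTransfer t s)

/-- The rectangular partition `(a^b)`: `b` copies of `a`. -/
def rect (a b : ℕ) : Multiset ℕ := Multiset.replicate b a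

/-- `α(ρ) = (a+1, a^{b-2}, a-1)`. -/
def alphaP (a b : ℕ) : Multiset ℕ := (a + 1) ::ₘ (a - 1) ::ₘ Multiset.replicate (b - 2) a

/-- `β(ρ) = (a^{b-1}, a-1, 1)`. -/
def betaP (a b : ℕ) : Multiset ℕ := (a - 1) ::ₘ 1 ::ₘ Multiset.replicate (b - 1) a

/-- `γ₁(ρ) = (a+1, a^{b-3}, (a-1)^2, 1)`. -/
def gamma1P (a b : ℕ) : Multiset ℕ :=
  (a + 1) ::ₘ 1 ::ₘ (Multiset.replicate 2 (a - 1) + Multiset.replicate (b - 3) a)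

/-- `γ₂(ρ) = (a+1, a^{b-2}, a-2, 1)`. -/
def gamma2P (a b : ℕ) : Multiset ℕ :=
  (a + 1) ::ₘ (a - 2) ::ₘ 1 ::ₘ Multiset.replicate (b - 2) a

/-- The set of nontrivial rectangular partitions of `n`. -/
def RectStar (n : ℕ) : Set (Multiset ℕ) :=
  {s | ∃ a b, 2 ≤ a ∧ 2 ≤ b ∧ a * b = n ∧ s = rect a b}

/-- The conjugate partition: its `k`-th part is the number of parts `≥ k`. -/
def conjP (s : Multiset ℕ) : Multiset ℕ :=
  Multiset.filter (fun m => 0 < m)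
    ((Multiset.range s.sum).map (fun k => (Multiset.filter (fun x => k + 1 ≤ x) s).card))

lemma add_pair (s : Multiset ℕ) (x y : ℕ) : s + {x, y} = x ::ₘ y ::ₘ s := by
  rw [add_comm]
  simp [Multiset.insert_eq_cons, Multiset.cons_add, Multiset.singleton_add]

lemma add_single (s : Multiset ℕ) (x : ℕ) : s + {x} = x ::ₘ s := by
  rw [add_comm, Multiset.singleton_add]

lemma filt2 (x y : ℕ) (hx : 0 < x) (hy : 0 < y) :
    Multiset.filter (fun z => 0 < z) ({x, y} : Multiset ℕ) = {x, y} := by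
  simp [Multiset.insert_eq_cons, Multiset.filter_cons, Multiset.filter_singleton, hx, hy]

lemma filt10 (x : ℕ) (hx : 0 < x) :
    Multiset.filter (fun z => 0 < z) ({x, 0} : Multiset ℕ) = {x} := by
  simp [Multiset.insert_eq_cons, Multiset.filter_cons, Multiset.filter_singleton, hx]

lemma swap3 (x y z : ℕ) (s : Multiset ℕ) : x ::ₘ y ::ₘ z ::ₘ s = z ::ₘ y ::ₘ x ::ₘ s := by
  rw [Multiset.cons_swap y z, Multiset.cons_swap x z, Multiset.cons_swap x y]

theorem stmt_4 (n a b : ℕ) (ha : 2 ≤ a) (hb : 2 ≤ b) (hn : a * b = n) :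
    Adj n (alphaP a b) (betaP a b) ∧
    Adj n (rect a b) (alphaP a b) ∧ Adj n (rect a b) (betaP a b) := by
  obtain ⟨c, rfl⟩ : ∃ c, b = c + 2 := ⟨b - 2, by omega⟩
  subst hn
  have hA : alphaP a (c + 2) = (a + 1) ::ₘ (a - 1) ::ₘ Multiset.replicate c a := rfl
  have hB : betaP a (c + 2) = (a - 1) ::ₘ 1 ::ₘ a ::ₘ Multiset.replicate c a := by
    simp [betaP, Multiset.replicate_succ]
  have hR : rect a (c + 2) = a ::ₘ a ::ₘ Multiset.replicate c a := by
    simp [rect, Multiset.replicate_succ]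
  have hrep : (Multiset.replicate c a).sum = c * a := by
    simp [Multiset.sum_replicate, smul_eq_mul]
  have hmul : a * (c + 2) = c * a + 2 * a := by ring
  have hca : ∀ m, m = c * a → a + 1 + (a - 1 + m) = a * (c + 2) ∧
      a - 1 + (1 + (a + m)) = a * (c + 2) ∧ a + (a + m) = a * (c + 2) := by
    rintro m rfl
    refine ⟨?_, ?_, ?_⟩ <;> omega
  obtain ⟨sA, sB, sR⟩ := hca (c * a) rfl
  have hPA : IsPartition (a * (c + 2)) (alphaP a (c + 2)) := by
    constructor
    · rw [hA]; simp [hrep]; omega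
    · intro x hx
      rw [hA] at hx
      simp [Multiset.mem_replicate] at hx
      omega
  have hPB : IsPartition (a * (c + 2)) (betaP a (c + 2)) := by
    constructor
    · rw [hB]; simp [hrep]; omega
    · intro x hx
      rw [hB] at hx
      simp [Multiset.mem_replicate] at hx
      omega
  have hPR : IsPartition (a * (c + 2)) (rect a (c + 2)) := by
    constructor
    · rw [hR]; simp [hrep]; omega
    · intro x hx
      rw [hR] at hx
      simp [Multiset.mem_replicate] at hx
      omega
  have hAB : alphaP a (c + 2) ≠ betaP a (c + 2) := by
    intro h
    have : a + 1 ∈ betaP a (c + 2) := by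
      rw [← h, hA]; exact Multiset.mem_cons_self _ _
    rw [hB] at this
    simp [Multiset.mem_replicate] at this
    omega
  have hRA : rect a (c + 2) ≠ alphaP a (c + 2) := by
    intro h
    have : a + 1 ∈ rect a (c + 2) := by
      rw [h, hA]; exact Multiset.mem_cons_self _ _
    rw [hR] at this
    simp [Multiset.mem_replicate] at this
  have hRB : rect a (c + 2) ≠ betaP a (c + 2) := by
    intro h
    have : (1 : ℕ) ∈ rect a (c + 2) := by
      rw [h, hB]; exact Multiset.mem_cons_of_mem (Multiset.mem_cons_self _ _)
    rw [hR] at this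
    simp [Multiset.mem_replicate] at this
    omega
  refine ⟨⟨hPA, hPB, hAB, Or.inl ?_⟩, ⟨hPR, hPA, hRA, Or.inl ?_⟩, ⟨hPR, hPB, hRB, Or.inl ?_⟩⟩
  · refine ⟨(a - 1) ::ₘ Multiset.replicate c a, a + 1, 0, by omega, ?_, ?_⟩
    · rw [filt10 _ (by omega), add_single, hA]
    · have h1 : a + 1 - 1 = a := rfl
      rw [h1, filt2 _ _ (by omega) (by omega), add_pair, hB, swap3]
  · refine ⟨Multiset.replicate c a, a, a, by omega, ?_, ?_⟩
    · rw [filt2 _ _ (by omega) (by omega), add_pair, hR]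
    · rw [filt2 _ _ (by omega) (by omega), add_pair, hA, Multiset.cons_swap]
  · refine ⟨a ::ₘ Multiset.replicate c a, a, 0, by omega, ?_, ?_⟩
    · rw [filt10 _ (by omega), add_single, hR]
    · rw [filt2 _ _ (by omega) (by omega), add_pair, hB]
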